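/- Let (β̂₁, β̂₂) be Kyle's two-period equilibrium: b̂₁ ∈ (0,1) the unique solution of 1 = b̂₁²/((1 − b̂₁²)²(1 + b̂₁²)), b̂₂ := 1, Σ̂₀ := Σ₀, Σ̂₁ := Σ̂₀/(1 + b̂₁²), β̂₁ := b̂₁σᵤ/√(Σ̂₀Δ), β̂₂ := b̂₂σᵤ/√(Σ̂₁Δ). Then the Jacobian matrix ∇T(β̂₁, β̂₂) satisfies ‖∇T(β̂₁, β̂₂)‖_∞ < 0.99, where ‖A‖_∞ = max over rows i of Σⱼ |A_{ij}| is the matrix norm induced by the sup norm on ℝ²; equivalently, |∂T₁/∂β₁| + |∂T₁/∂β₂| < 0.99 and |∂T₂/∂β₁| + |∂T₂/∂β₂| < 0.99 at (β̂₁, β̂₂). -/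
import Mathlib


/-- First coordinate of the two-period policy-iteration map. -/
noncomputable def T2p1 (Δ σu Sig0 β1 β2 : ℝ) : ℝ :=
  (β1 ^ 2 * Δ * Sig0 + σu ^ 2) *
      (β1 * Δ * Sig0 * (β1 - β2) ^ 2 + σu ^ 2 * (β1 - 2 * β2)) /
    (β1 * Δ * Sig0 *
      (β1 * Δ * Sig0 * (β1 ^ 2 - 4 * β1 * β2 + β2 ^ 2) + σu ^ 2 * (β1 - 4 * β2)))

/-- Second coordinate of the two-period policy-iteration map. -/
noncomputable def T2p2 (Δ σu Sig0 β1 β2 : ℝ) : ℝ :=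
  (Δ * Sig0 * (β1 ^ 2 + β2 ^ 2) + σu ^ 2) / (2 * β2 * Δ * Sig0)

lemma scale1 (Δ σu Sig0 s u v : ℝ) (hs : s ≠ 0) (hds : Δ * Sig0 ≠ 0)
    (h2 : σu ^ 2 = s ^ 2 * (Δ * Sig0)) :
    T2p1 Δ σu Sig0 (s * u) (s * v) =
      s * ((u * u + 1) * (u * ((u - v) * (u - v)) + (u - 2 * v)) /
        (u * (u * (u * u - 4 * u * v + v * v) + (u - 4 * v)))) := by
  have hc : (s ^ 4 * (Δ * Sig0) ^ 2) ≠ 0 :=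
    mul_ne_zero (pow_ne_zero _ hs) (pow_ne_zero _ hds)
  simp only [T2p1]
  rw [h2]
  rw [← mul_div_assoc]
  rcases eq_or_ne (u * (u * (u * u - 4 * u * v + v * v) + (u - 4 * v))) 0 with h | h
  · rw [h, div_zero]
    have hD0 : s * u * Δ * Sig0 *
        (s * u * Δ * Sig0 * ((s * u) ^ 2 - 4 * (s * u) * (s * v) + (s * v) ^ 2) +
          s ^ 2 * (Δ * Sig0) * (s * u - 4 * (s * v))) = 0 := by
      linear_combination (s ^ 4 * (Δ * Sig0) ^ 2) * h
    rw [hD0, div_zero]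
  · have hD : s * u * Δ * Sig0 *
        (s * u * Δ * Sig0 * ((s * u) ^ 2 - 4 * (s * u) * (s * v) + (s * v) ^ 2) +
          s ^ 2 * (Δ * Sig0) * (s * u - 4 * (s * v))) ≠ 0 := by
      intro h0
      apply mul_ne_zero hc h
      linear_combination h0
    rw [div_eq_div_iff hD h]
    ring

lemma scale2 (Δ σu Sig0 s u v : ℝ) (hs : s ≠ 0) (hds : Δ * Sig0 ≠ 0)
    (h2 : σu ^ 2 = s ^ 2 * (Δ * Sig0)) :
    T2p2 Δ σu Sig0 (s * u) (s * v) = s * ((u * u + v * v + 1) / (2 * v)) := by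
  simp only [T2p2]
  rw [h2]
  rw [← mul_div_assoc]
  rcases eq_or_ne v 0 with hv | hv
  · rw [hv]
    norm_num
  · have hD : 2 * (s * v) * Δ * Sig0 ≠ 0 := by
      intro h0
      apply mul_ne_zero (mul_ne_zero two_ne_zero hv) (mul_ne_zero hs hds)
      linear_combination h0
    rw [div_eq_div_iff hD (mul_ne_zero two_ne_zero hv)]
    ring

set_option maxHeartbeats 2000000 in
/-- At Kyle's two-period equilibrium `(β̂₁, β̂₂)`, the Jacobian matrix of `T`
has `∞`-operator norm (maximal absolute row sum) strictly smaller than `0.99`: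
`|∂T₁/∂β₁| + |∂T₁/∂β₂| < 0.99` and `|∂T₂/∂β₁| + |∂T₂/∂β₂| < 0.99`. -/
theorem two_period_jacobian_norm_lt (Δ σu Sig0 : ℝ) (hΔ : 0 < Δ)
    (hσ : 0 < σu) (hSig : 0 < Sig0) (b1 : ℝ) (hb1 : b1 ∈ Set.Ioo (0 : ℝ) 1)
    (hb1eq : 1 = b1 ^ 2 / ((1 - b1 ^ 2) ^ 2 * (1 + b1 ^ 2))) :
    let β1 : ℝ := b1 * σu / Real.sqrt (Sig0 * Δ)
    let β2 : ℝ := 1 * σu / Real.sqrt (Sig0 / (1 + b1 ^ 2) * Δ)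
    |deriv (fun x => T2p1 Δ σu Sig0 x β2) β1| +
        |deriv (fun y => T2p1 Δ σu Sig0 β1 y) β2| < 0.99 ∧
    |deriv (fun x => T2p2 Δ σu Sig0 x β2) β1| +
        |deriv (fun y => T2p2 Δ σu Sig0 β1 y) β2| < 0.99 := by
  intro β1 β2
  obtain ⟨hb1p, hb1l⟩ := hb1
  have hSD : (0:ℝ) < Sig0 * Δ := mul_pos hSig hΔ
  have hds : Δ * Sig0 ≠ 0 := ne_of_gt (mul_pos hΔ hSig)
  have hrpos : 0 < Real.sqrt (Sig0 * Δ) := Real.sqrt_pos.2 hSD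
  set s : ℝ := σu / Real.sqrt (Sig0 * Δ) with hsdef
  have hspos : 0 < s := div_pos hσ hrpos
  have hs : s ≠ 0 := ne_of_gt hspos
  have h2 : σu ^ 2 = s ^ 2 * (Δ * Sig0) := by
    rw [hsdef, div_pow, Real.sq_sqrt (le_of_lt hSD)]
    field_simp
  have h1x : (0:ℝ) < 1 + b1 ^ 2 := by positivity
  set b2 : ℝ := Real.sqrt (1 + b1 ^ 2) with hb2def
  have hb2sq : b2 ^ 2 = 1 + b1 ^ 2 := Real.sq_sqrt (le_of_lt h1x)
  have hb2pos : 0 < b2 := Real.sqrt_pos.2 h1x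
  have hb1sq : 0 < b1 ^ 2 := by positivity
  have hx1 : b1 ^ 2 < 1 := by nlinarith
  have hb2ge1 : 1 ≤ b2 := by nlinarith
  have hβ1 : β1 = s * b1 := by
    show b1 * σu / Real.sqrt (Sig0 * Δ) = s * b1
    rw [hsdef]; ring
  have hβ2 : β2 = s * b2 := by
    show 1 * σu / Real.sqrt (Sig0 / (1 + b1 ^ 2) * Δ) = s * b2
    rw [show Sig0 / (1 + b1 ^ 2) * Δ = Sig0 * Δ / (1 + b1 ^ 2) from by ring,
      Real.sqrt_div (le_of_lt hSD) (1 + b1 ^ 2), hsdef, hb2def, div_div_eq_mul_div]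
    ring
  -- cubic for x = b1^2
  have hcub : b1 ^ 6 - b1 ^ 4 - 2 * b1 ^ 2 + 1 = 0 := by
    have hne : ((1 - b1 ^ 2) ^ 2 * (1 + b1 ^ 2)) ≠ 0 := by
      have : (0:ℝ) < (1 - b1 ^ 2) ^ 2 * (1 + b1 ^ 2) := by nlinarith
      exact ne_of_gt this
    have h := hb1eq
    rw [eq_div_iff hne] at h
    linear_combination h
  have hc3 : (b1 ^ 2) ^ 3 - (b1 ^ 2) ^ 2 - 2 * b1 ^ 2 + 1 = 0 := by linear_combination hcub
  have hxlo : (0.445:ℝ) < b1 ^ 2 := by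
    by_contra hle
    push_neg at hle
    have hg : b1 ^ 2 * b1 ^ 2 - 0.555 * b1 ^ 2 - 2.246975 < 0 := by nlinarith
    nlinarith [hc3, mul_nonneg (by linarith : (0:ℝ) ≤ 0.445 - b1 ^ 2)
      (by linarith : (0:ℝ) ≤ -(b1 ^ 2 * b1 ^ 2 - 0.555 * b1 ^ 2 - 2.246975))]
  have hxhi : b1 ^ 2 < (0.4451:ℝ) := by
    by_contra hle
    push_neg at hle
    have hg : b1 ^ 2 * b1 ^ 2 - 0.5549 * b1 ^ 2 - 2.24698599 < 0 := by nlinarith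
    nlinarith [hc3, mul_nonneg (by linarith : (0:ℝ) ≤ b1 ^ 2 - 0.4451)
      (by linarith : (0:ℝ) ≤ -(b1 ^ 2 * b1 ^ 2 - 0.5549 * b1 ^ 2 - 2.24698599))]
  have hx2lo : (0.198025:ℝ) < b1 ^ 4 := by nlinarith
  have hx2hi : b1 ^ 4 < (0.19811401:ℝ) := by nlinarith
  -- denominator of normalized map at (b1,b2)
  have hQform : b1 * (b1 * (b1 * b1 - 4 * b1 * b2 + b2 * b2) + (b1 - 4 * b2)) =
      2 * b1 * (1 + b1 ^ 2) * (b1 - 2 * b2) := by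
    linear_combination b1 ^ 2 * hb2sq
  have hQlt : b1 * (b1 * (b1 * b1 - 4 * b1 * b2 + b2 * b2) + (b1 - 4 * b2)) < 0 := by
    rw [hQform]
    have hpos : 0 < 2 * b1 * (1 + b1 ^ 2) := by positivity
    have hneg : b1 - 2 * b2 < 0 := by nlinarith
    exact mul_neg_of_pos_of_neg hpos hneg
  have hQne : b1 * (b1 * (b1 * b1 - 4 * b1 * b2 + b2 * b2) + (b1 - 4 * b2)) ≠ 0 :=
    ne_of_lt hQlt
  have htpos : 0 < b1 * b2 := mul_pos hb1p hb2pos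
  have ht2 : (b1 * b2) ^ 2 = b1 ^ 2 * (1 + b1 ^ 2) := by rw [mul_pow, hb2sq]
  have htlo : (0.8018:ℝ) < b1 * b2 := by nlinarith [ht2, htpos, hxlo, hxhi]
  have hthi : b1 * b2 < (0.8021:ℝ) := by nlinarith [ht2, htpos, hxlo, hxhi]
  have hBlo : (-43.7112:ℝ) < -924 + 2463 * b1 ^ 2 - 1089 * b1 ^ 4 := by nlinarith
  have hBhi : (-924:ℝ) + 2463 * b1 ^ 2 - 1089 * b1 ^ 4 < -43.363 := by nlinarith
  have hAlo : (-131.014:ℝ) < 395 - 1499 * b1 ^ 2 + 713 * b1 ^ 4 := by nlinarith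
  have hAhi : (395:ℝ) - 1499 * b1 ^ 2 + 713 * b1 ^ 4 < -130.799 := by nlinarith
  have hp1 : 0 < b1 * b2 * ((-924 + 2463 * b1 ^ 2 - 1089 * b1 ^ 4) + 43.7112) :=
    mul_pos htpos (by linarith)
  have hp2 : b1 * b2 * (-924 + 2463 * b1 ^ 2 - 1089 * b1 ^ 4) < 0 :=
    mul_neg_of_pos_of_neg htpos (by linarith)
  have hb1small : b1 < 0.7 := by nlinarith [hxhi, hb1p]
  have hpt1 : β1 / s = b1 := by rw [hβ1]; field_simp
  have hpt2 : β2 / s = b2 := by rw [hβ2]; field_simp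
  have hdivs1 : HasDerivAt (fun t : ℝ => t / s) (1 / s) β1 := (hasDerivAt_id β1).div_const s
  have hdivs2 : HasDerivAt (fun t : ℝ => t / s) (1 / s) β2 := (hasDerivAt_id β2).div_const s
  have hts : ∀ t : ℝ, t = s * (t / s) := by
    intro t
    rw [mul_comm, div_mul_cancel₀ t hs]
  -- ===== coordinate 1, derivative in first variable =====
  have funeq1 : (fun x => T2p1 Δ σu Sig0 x β2) = (fun t : ℝ =>
      s * (((t/s) * (t/s) + 1) * ((t/s) * (((t/s) - b2) * ((t/s) - b2)) + ((t/s) - 2 * b2)) /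
        ((t/s) * ((t/s) * ((t/s) * (t/s) - 4 * (t/s) * b2 + b2 * b2) + ((t/s) - 4 * b2))))) := by
    funext t
    rw [hβ2]
    conv_lhs => rw [hts t]
    exact scale1 Δ σu Sig0 s (t/s) b2 hs hds h2
  have hN1 : HasDerivAt (fun u : ℝ => (u * u + 1) * (u * ((u - b2) * (u - b2)) + (u - 2 * b2)))
      ((1 * b1 + b1 * 1) * (b1 * ((b1 - b2) * (b1 - b2)) + (b1 - 2 * b2)) +
        (b1 * b1 + 1) * (1 * ((b1 - b2) * (b1 - b2)) + b1 * (1 * (b1 - b2) + (b1 - b2) * 1) + 1)) b1 :=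
    (((hasDerivAt_id b1).mul (hasDerivAt_id b1)).add_const 1).mul
      (((hasDerivAt_id b1).mul (((hasDerivAt_id b1).sub_const b2).mul
        ((hasDerivAt_id b1).sub_const b2))).add ((hasDerivAt_id b1).sub_const (2 * b2)))
  have hD1 : HasDerivAt (fun u : ℝ => u * (u * (u * u - 4 * u * b2 + b2 * b2) + (u - 4 * b2)))
      (1 * (b1 * (b1 * b1 - 4 * b1 * b2 + b2 * b2) + (b1 - 4 * b2)) +
        b1 * (1 * (b1 * b1 - 4 * b1 * b2 + b2 * b2) + b1 * (1 * b1 + b1 * 1 - 4 * 1 * b2) + 1)) b1 :=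
    (hasDerivAt_id b1).mul
      (((hasDerivAt_id b1).mul ((((hasDerivAt_id b1).mul (hasDerivAt_id b1)).sub
        (((hasDerivAt_id b1).const_mul 4).mul_const b2)).add_const (b2 * b2))).add
        ((hasDerivAt_id b1).sub_const (4 * b2)))
  have hQ1 : HasDerivAt (fun u : ℝ =>
      (u * u + 1) * (u * ((u - b2) * (u - b2)) + (u - 2 * b2)) /
        (u * (u * (u * u - 4 * u * b2 + b2 * b2) + (u - 4 * b2))))
      ((((1 * b1 + b1 * 1) * (b1 * ((b1 - b2) * (b1 - b2)) + (b1 - 2 * b2)) +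
        (b1 * b1 + 1) * (1 * ((b1 - b2) * (b1 - b2)) + b1 * (1 * (b1 - b2) + (b1 - b2) * 1) + 1)) *
          (b1 * (b1 * (b1 * b1 - 4 * b1 * b2 + b2 * b2) + (b1 - 4 * b2))) -
        ((b1 * b1 + 1) * (b1 * ((b1 - b2) * (b1 - b2)) + (b1 - 2 * b2))) *
          (1 * (b1 * (b1 * b1 - 4 * b1 * b2 + b2 * b2) + (b1 - 4 * b2)) +
            b1 * (1 * (b1 * b1 - 4 * b1 * b2 + b2 * b2) + b1 * (1 * b1 + b1 * 1 - 4 * 1 * b2) + 1))) /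
        (b1 * (b1 * (b1 * b1 - 4 * b1 * b2 + b2 * b2) + (b1 - 4 * b2))) ^ 2) (β1 / s) := by
    rw [hpt1]
    exact hN1.div hD1 hQne
  have hmain1 : HasDerivAt (fun x => T2p1 Δ σu Sig0 x β2)
      (s * (((((1 * b1 + b1 * 1) * (b1 * ((b1 - b2) * (b1 - b2)) + (b1 - 2 * b2)) +
        (b1 * b1 + 1) * (1 * ((b1 - b2) * (b1 - b2)) + b1 * (1 * (b1 - b2) + (b1 - b2) * 1) + 1)) *
          (b1 * (b1 * (b1 * b1 - 4 * b1 * b2 + b2 * b2) + (b1 - 4 * b2))) -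
        ((b1 * b1 + 1) * (b1 * ((b1 - b2) * (b1 - b2)) + (b1 - 2 * b2))) *
          (1 * (b1 * (b1 * b1 - 4 * b1 * b2 + b2 * b2) + (b1 - 4 * b2)) +
            b1 * (1 * (b1 * b1 - 4 * b1 * b2 + b2 * b2) + b1 * (1 * b1 + b1 * 1 - 4 * 1 * b2) + 1))) /
        (b1 * (b1 * (b1 * b1 - 4 * b1 * b2 + b2 * b2) + (b1 - 4 * b2))) ^ 2) * (1 / s))) β1 := by
    rw [funeq1]
    exact (HasDerivAt.comp β1 hQ1 hdivs1).const_mul s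
  -- ===== coordinate 1, derivative in second variable =====
  have funeq2 : (fun y => T2p1 Δ σu Sig0 β1 y) = (fun t : ℝ =>
      s * ((b1 * b1 + 1) * (b1 * ((b1 - (t/s)) * (b1 - (t/s))) + (b1 - 2 * (t/s))) /
        (b1 * (b1 * (b1 * b1 - 4 * b1 * (t/s) + (t/s) * (t/s)) + (b1 - 4 * (t/s)))))) := by
    funext t
    rw [hβ1]
    conv_lhs => rw [hts t]
    exact scale1 Δ σu Sig0 s b1 (t/s) hs hds h2
  have hN2 : HasDerivAt (fun v : ℝ => (b1 * b1 + 1) * (b1 * ((b1 - v) * (b1 - v)) + (b1 - 2 * v)))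
      ((b1 * b1 + 1) * (b1 * (-1 * (b1 - b2) + (b1 - b2) * -1) + -(2 * 1))) b2 :=
    ((((((hasDerivAt_id b2).const_sub b1).mul ((hasDerivAt_id b2).const_sub b1)).const_mul b1).add
      (((hasDerivAt_id b2).const_mul 2).const_sub b1)).const_mul (b1 * b1 + 1))
  have hD2 : HasDerivAt (fun v : ℝ =>
      b1 * (b1 * (b1 * b1 - 4 * b1 * v + v * v) + (b1 - 4 * v)))
      (b1 * (b1 * (0 - 4 * b1 * 1 + (1 * b2 + b2 * 1)) + -(4 * 1))) b2 :=
    (((((hasDerivAt_const b2 (b1 * b1)).sub ((hasDerivAt_id b2).const_mul (4 * b1))).add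
      ((hasDerivAt_id b2).mul (hasDerivAt_id b2))).const_mul b1).add
      (((hasDerivAt_id b2).const_mul 4).const_sub b1)).const_mul b1
  have hQ2 : HasDerivAt (fun v : ℝ =>
      (b1 * b1 + 1) * (b1 * ((b1 - v) * (b1 - v)) + (b1 - 2 * v)) /
        (b1 * (b1 * (b1 * b1 - 4 * b1 * v + v * v) + (b1 - 4 * v))))
      ((((b1 * b1 + 1) * (b1 * (-1 * (b1 - b2) + (b1 - b2) * -1) + -(2 * 1))) *
          (b1 * (b1 * (b1 * b1 - 4 * b1 * b2 + b2 * b2) + (b1 - 4 * b2))) -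
        ((b1 * b1 + 1) * (b1 * ((b1 - b2) * (b1 - b2)) + (b1 - 2 * b2))) *
          (b1 * (b1 * (0 - 4 * b1 * 1 + (1 * b2 + b2 * 1)) + -(4 * 1)))) /
        (b1 * (b1 * (b1 * b1 - 4 * b1 * b2 + b2 * b2) + (b1 - 4 * b2))) ^ 2) (β2 / s) := by
    rw [hpt2]
    exact hN2.div hD2 hQne
  have hmain2 : HasDerivAt (fun y => T2p1 Δ σu Sig0 β1 y)
      (s * (((((b1 * b1 + 1) * (b1 * (-1 * (b1 - b2) + (b1 - b2) * -1) + -(2 * 1))) *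
          (b1 * (b1 * (b1 * b1 - 4 * b1 * b2 + b2 * b2) + (b1 - 4 * b2))) -
        ((b1 * b1 + 1) * (b1 * ((b1 - b2) * (b1 - b2)) + (b1 - 2 * b2))) *
          (b1 * (b1 * (0 - 4 * b1 * 1 + (1 * b2 + b2 * 1)) + -(4 * 1)))) /
        (b1 * (b1 * (b1 * b1 - 4 * b1 * b2 + b2 * b2) + (b1 - 4 * b2))) ^ 2) * (1 / s))) β2 := by
    rw [funeq2]
    exact (HasDerivAt.comp β2 hQ2 hdivs2).const_mul s
  -- ===== coordinate 2 =====
  have funeq3 : (fun x => T2p2 Δ σu Sig0 x β2) = (fun t : ℝ =>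
      s * (((t/s) * (t/s) + b2 * b2 + 1) / (2 * b2))) := by
    funext t
    rw [hβ2]
    conv_lhs => rw [hts t]
    exact scale2 Δ σu Sig0 s (t/s) b2 hs hds h2
  have funeq4 : (fun y => T2p2 Δ σu Sig0 β1 y) = (fun t : ℝ =>
      s * ((b1 * b1 + (t/s) * (t/s) + 1) / (2 * (t/s)))) := by
    funext t
    rw [hβ1]
    conv_lhs => rw [hts t]
    exact scale2 Δ σu Sig0 s b1 (t/s) hs hds h2
  have hP3 : HasDerivAt (fun u : ℝ => (u * u + b2 * b2 + 1) / (2 * b2))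
      ((1 * b1 + b1 * 1) / (2 * b2)) (β1 / s) := by
    rw [hpt1]
    exact ((((hasDerivAt_id b1).mul (hasDerivAt_id b1)).add_const (b2 * b2)).add_const 1).div_const (2 * b2)
  have hmain3 : HasDerivAt (fun x => T2p2 Δ σu Sig0 x β2)
      (s * (((1 * b1 + b1 * 1) / (2 * b2)) * (1 / s))) β1 := by
    rw [funeq3]
    exact (HasDerivAt.comp β1 hP3 hdivs1).const_mul s
  have h2b2 : (2 : ℝ) * b2 ≠ 0 := by positivity
  have hP4 : HasDerivAt (fun v : ℝ => (b1 * b1 + v * v + 1) / (2 * v))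
      (((0 + (1 * b2 + b2 * 1)) * (2 * b2) - (b1 * b1 + b2 * b2 + 1) * (2 * 1)) / (2 * b2) ^ 2)
      (β2 / s) := by
    rw [hpt2]
    exact (((hasDerivAt_const b2 (b1 * b1)).add ((hasDerivAt_id b2).mul (hasDerivAt_id b2))).add_const 1).div
      ((hasDerivAt_id b2).const_mul 2) h2b2
  have hmain4 : HasDerivAt (fun y => T2p2 Δ σu Sig0 β1 y)
      (s * ((((0 + (1 * b2 + b2 * 1)) * (2 * b2) - (b1 * b1 + b2 * b2 + 1) * (2 * 1)) / (2 * b2) ^ 2)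
        * (1 / s))) β2 := by
    rw [funeq4]
    exact (HasDerivAt.comp β2 hP4 hdivs2).const_mul s
  -- ===== value computations =====
  have hcancel : ∀ X : ℝ, s * (X * (1 / s)) = X := by
    intro X
    rw [mul_comm, mul_assoc, one_div_mul_cancel hs, mul_one]
  -- value of d11
  have hval1 : s * (((((1 * b1 + b1 * 1) * (b1 * ((b1 - b2) * (b1 - b2)) + (b1 - 2 * b2)) +
        (b1 * b1 + 1) * (1 * ((b1 - b2) * (b1 - b2)) + b1 * (1 * (b1 - b2) + (b1 - b2) * 1) + 1)) *
          (b1 * (b1 * (b1 * b1 - 4 * b1 * b2 + b2 * b2) + (b1 - 4 * b2))) -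
        ((b1 * b1 + 1) * (b1 * ((b1 - b2) * (b1 - b2)) + (b1 - 2 * b2))) *
          (1 * (b1 * (b1 * b1 - 4 * b1 * b2 + b2 * b2) + (b1 - 4 * b2)) +
            b1 * (1 * (b1 * b1 - 4 * b1 * b2 + b2 * b2) + b1 * (1 * b1 + b1 * 1 - 4 * 1 * b2) + 1))) /
        (b1 * (b1 * (b1 * b1 - 4 * b1 * b2 + b2 * b2) + (b1 - 4 * b2))) ^ 2) * (1 / s)) =
      (395 - 1499 * b1 ^ 2 + 713 * b1 ^ 4 +
        b1 * b2 * (-924 + 2463 * b1 ^ 2 - 1089 * b1 ^ 4)) / 169 := by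
    rw [hcancel]
    rw [div_eq_div_iff (pow_ne_zero 2 hQne) (by norm_num : (169:ℝ) ≠ 0)]
    linear_combination
      (-1352 + 676 * b1 * b2 - 8179 * b1 ^ 2 - 169 * b1 ^ 2 * b2 ^ 2 + 17944 * b1 ^ 3 * b2 -
        3273 * b1 ^ 4 - 7618 * b1 ^ 4 * b2 ^ 2 - 16576 * b1 ^ 5 * b2 + 924 * b1 ^ 5 * b2 ^ 3 +
        45251 * b1 ^ 6 + 13811 * b1 ^ 6 * b2 ^ 2 - 57513 * b1 ^ 7 * b2 - 2463 * b1 ^ 7 * b2 ^ 3 +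
        50134 * b1 ^ 8 + 10279 * b1 ^ 8 * b2 ^ 2 - 2978 * b1 ^ 9 * b2 + 1089 * b1 ^ 9 * b2 ^ 3 -
        8987 * b1 ^ 10 - 8712 * b1 ^ 10 * b2 ^ 2 + 20691 * b1 ^ 11 * b2 - 17424 * b1 ^ 12) * hb2sq +
      (-1352 - 12404 * b1 ^ 2 - 38176 * b1 ^ 4 - 44548 * b1 ^ 6 - 17424 * b1 ^ 8 +
        b2 * (1352 * b1 + 24484 * b1 ^ 3 + 44912 * b1 ^ 5 + 21780 * b1 ^ 7)) * hcub
  -- d12 = 0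
  have hnum2 : (((b1 * b1 + 1) * (b1 * (-1 * (b1 - b2) + (b1 - b2) * -1) + -(2 * 1))) *
          (b1 * (b1 * (b1 * b1 - 4 * b1 * b2 + b2 * b2) + (b1 - 4 * b2))) -
        ((b1 * b1 + 1) * (b1 * ((b1 - b2) * (b1 - b2)) + (b1 - 2 * b2))) *
          (b1 * (b1 * (0 - 4 * b1 * 1 + (1 * b2 + b2 * 1)) + -(4 * 1)))) = 0 := by
    linear_combination (-2 * b1 ^ 2 - 4 * b1 ^ 4 - 2 * b1 ^ 6) * hb2sq
  have hval2 : s * (((((b1 * b1 + 1) * (b1 * (-1 * (b1 - b2) + (b1 - b2) * -1) + -(2 * 1))) *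
          (b1 * (b1 * (b1 * b1 - 4 * b1 * b2 + b2 * b2) + (b1 - 4 * b2))) -
        ((b1 * b1 + 1) * (b1 * ((b1 - b2) * (b1 - b2)) + (b1 - 2 * b2))) *
          (b1 * (b1 * (0 - 4 * b1 * 1 + (1 * b2 + b2 * 1)) + -(4 * 1)))) /
        (b1 * (b1 * (b1 * b1 - 4 * b1 * b2 + b2 * b2) + (b1 - 4 * b2))) ^ 2) * (1 / s)) = 0 := by
    rw [hcancel, hnum2, zero_div]
  have hval3 : s * (((1 * b1 + b1 * 1) / (2 * b2)) * (1 / s)) = b1 / b2 := by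
    rw [hcancel]
    rw [div_eq_div_iff h2b2 (ne_of_gt hb2pos)]
    ring
  have hval4 : s * ((((0 + (1 * b2 + b2 * 1)) * (2 * b2) - (b1 * b1 + b2 * b2 + 1) * (2 * 1)) /
      (2 * b2) ^ 2) * (1 / s)) = 0 := by
    rw [hcancel]
    rw [show ((0 + (1 * b2 + b2 * 1)) * (2 * b2) - (b1 * b1 + b2 * b2 + 1) * (2 * 1)) = 0 from by
      linear_combination 2 * hb2sq, zero_div]
  -- t bounds
  constructor
  · rw [hmain1.deriv, hmain2.deriv, hval1, hval2, abs_zero, add_zero, abs_lt]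
    constructor
    · linarith only [hp1, hthi, hAlo]
    · linarith only [hp2, hAhi]
  · rw [hmain3.deriv, hmain4.deriv, hval3, hval4, abs_zero, add_zero]
    rw [abs_of_pos (div_pos hb1p hb2pos), div_lt_iff₀ hb2pos]
    linarith only [hb1small, hb2ge1]
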